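/- arXiv:2111.08432 — 3 statements merged into one kernel-verified Lean document; each statement's English description precedes it below -/
import Mathlib

section
/- Consider a commuting square of ring homomorphisms R → R₁, R → R₂, R₁ → R₁₂, R₂ → R₁₂ which is a gluing diagram, i.e. the sequence of R-modules 0 → R → R₁ ⊕ R₂ → R₁₂ → 0 (last map the difference of the two homomorphisms) is exact. Given a finite gluing datum (M₁, M₂, M₁₂, ψ₁, ψ₂) such that the natural map M ⊗_R R₁ → M₁ is surjective, where M := ker(ψ₁ - ψ₂ : M₁ ⊕ M₂ → M₁₂), then: (1) the map ψ₁ - ψ₂ : M₁ ⊕ M₂ → M₁₂ is surjective; (2) the map M ⊗_R R₂ → M₂ is surjective; (3) there exists a finitely generated R-submodule M₀ of M such that M₀ ⊗ R₁ → M₁ and M₀ ⊗ R₂ → M₂ are both surjective. -/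
/-!
Write `z ∈ R₁₂` as `x₁ - x₂`. For `(m₁, m₂) ∈ M` this gives
`z • ψ₁ m₁ = ψ₁ (x₁ • m₁) - ψ₂ (x₂ • m₂)`, so, since the first components of `M` generate `M₁`
and the image of `M₁` generates `M₁₂`, every element of `M₁₂` is `ψ₁ m₁ - ψ₂ n` with `n` in the
`R₂`-span `N₂` of the second components of `M`. Applied to `ψ₂ m₂` this puts `(m₁, m₂ + n)` in `M`,
so `m₂ ∈ N₂`. Finitely many elements of `M` then already generate `M₁` and `M₂`.
-/

open TensorProduct Submodule

theorem exists_finset_subset_span_image_eq_top {A N P : Type*} [Semiring A] [AddCommMonoid N]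
    [Module A N] [Module.Finite A N] (f : P → N) {S : Set P} (h : span A (f '' S) = ⊤) :
    ∃ s : Finset P, ↑s ⊆ S ∧ span A (f '' s) = ⊤ := by
  obtain ⟨s', hs'S, hs'⟩ :=
    (fg_span_iff_fg_span_finset_subset _).1 (h ▸ Module.Finite.fg_top (R := A) (M := N))
  obtain ⟨t, htS, htfin, ht⟩ := Set.exists_subset_image_finite_and (p := fun t ↦ span A t = ⊤)
    |>.1 ⟨_, hs'S, s'.finite_toSet, hs'.symm.trans h⟩
  exact ⟨htfin.toFinset, by simpa using htS, by simpa using ht⟩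

theorem exists_finset_subset_span_fst_snd_eq_top {R1 R2 M1 M2 : Type*} [Semiring R1]
    [Semiring R2] [AddCommMonoid M1] [Module R1 M1] [Module.Finite R1 M1] [AddCommMonoid M2]
    [Module R2 M2] [Module.Finite R2 M2] {S : Set (M1 × M2)}
    (h1 : span R1 (Prod.fst '' S) = ⊤) (h2 : span R2 (Prod.snd '' S) = ⊤) :
    ∃ s : Finset (M1 × M2), ↑s ⊆ S ∧
      span R1 (Prod.fst '' (s : Set (M1 × M2))) = ⊤ ∧
      span R2 (Prod.snd '' (s : Set (M1 × M2))) = ⊤ := by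
  classical
  obtain ⟨s1, hs1S, hs1⟩ := exists_finset_subset_span_image_eq_top Prod.fst h1
  obtain ⟨s2, hs2S, hs2⟩ := exists_finset_subset_span_image_eq_top Prod.snd h2
  refine ⟨s1 ∪ s2, by simpa using Set.union_subset hs1S hs2S, ?_, ?_⟩
  · exact top_le_iff.1 (hs1 ▸ span_mono (Set.image_mono (by simp)))
  · exact top_le_iff.1 (hs2 ▸ span_mono (Set.image_mono (by simp)))

namespace TensorProduct

variable (R S M : Type*) [CommSemiring R] [Semiring S] [Algebra R S] [AddCommMonoid M]
  [Module R M]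

def oneTmulₛₗ : M →ₛₗ[algebraMap R S] S ⊗[R] M where
  toFun m := 1 ⊗ₜ m
  map_add' := tmul_add 1
  map_smul' r m := by rw [← smul_tmul, smul_tmul', algebraMap_smul]

theorem span_range_oneTmulₛₗ : span S (Set.range (oneTmulₛₗ R S M)) = ⊤ := by
  rw [← baseChange_top (R := R) (M := M) S, baseChange_eq_span, Submodule.map_top]
  rfl

end TensorProduct

section Gluing

variable {R1 R2 R12 M1 M2 M12 : Type*} [Ring R1] [Ring R2] [Ring R12] {f1 : R1 →+* R12}
  {f2 : R2 →+* R12} [AddCommGroup M1] [Module R1 M1] [AddCommGroup M2] [Module R2 M2]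
  [AddCommGroup M12] [Module R12 M12] (φ1 : M1 →ₛₗ[f1] M12) (φ2 : M2 →ₛₗ[f2] M12)

def gluingKernel : Set (M1 × M2) := {x | φ1 x.1 = φ2 x.2}

variable {φ1 φ2}

theorem exists_sub_eq_of_span_fst_gluingKernel_eq_top
    (hf : ∀ z : R12, ∃ (x1 : R1) (x2 : R2), f1 x1 - f2 x2 = z)
    (hφ1 : span R12 (Set.range φ1) = ⊤) (h1 : span R1 (Prod.fst '' gluingKernel φ1 φ2) = ⊤)
    (w : M12) :
    ∃ m1, ∃ m2 ∈ span R2 (Prod.snd '' gluingKernel φ1 φ2), φ1 m1 - φ2 m2 = w := by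
  set N2 := span R2 (Prod.snd '' gluingKernel φ1 φ2)
  -- `T` is not an `R₁₂`-submodule: scalars are absorbed on generators of `M₁` through `hf`.
  let T : AddSubgroup M12 :=
    φ1.toAddMonoidHom.range ⊔ N2.toAddSubgroup.map φ2.toAddMonoidHom
  have hφ2 {m2 : M2} (hm2 : m2 ∈ N2) : φ2 m2 ∈ T :=
    AddSubgroup.mem_sup_right (AddSubgroup.mem_map_of_mem _ hm2)
  have hsmul (z : R12) (m1 : M1) : z • φ1 m1 ∈ T := by
    have hm1 : m1 ∈ span R1 (Prod.fst '' gluingKernel φ1 φ2) := h1 ▸ mem_top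
    induction hm1 using span_induction generalizing z with
    | mem _ hm =>
      obtain ⟨⟨a, b⟩, hab, rfl⟩ := hm
      obtain ⟨x1, x2, rfl⟩ := hf z
      rw [sub_smul, ← φ1.map_smulₛₗ, hab, ← φ2.map_smulₛₗ]
      exact sub_mem (AddSubgroup.mem_sup_left ⟨_, rfl⟩)
        (hφ2 (smul_mem _ _ (subset_span ⟨_, hab, rfl⟩)))
    | zero => simp
    | add _ _ _ _ ihx ihy => simpa only [map_add, smul_add] using add_mem (ihx z) (ihy z)
    | smul x _ _ ih => simpa only [φ1.map_smulₛₗ, smul_smul] using ih (z * f1 x)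
  have hw : w ∈ T := by
    have hspan : w ∈ span R12 (Set.range φ1) := hφ1 ▸ mem_top
    induction hspan using closure_induction with
    | zero => exact zero_mem T
    | add _ _ _ _ ihx ihy => exact add_mem ihx ihy
    | smul_mem z _ hx => obtain ⟨m1, rfl⟩ := hx; exact hsmul z m1
  obtain ⟨_, ⟨m1, rfl⟩, _, ⟨n, hn, rfl⟩, rfl⟩ := AddSubgroup.mem_sup.1 hw
  exact ⟨m1, -n, neg_mem hn, by simp⟩

theorem span_snd_gluingKernel_eq_top
    (hf : ∀ z : R12, ∃ (x1 : R1) (x2 : R2), f1 x1 - f2 x2 = z)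
    (hφ1 : span R12 (Set.range φ1) = ⊤) (h1 : span R1 (Prod.fst '' gluingKernel φ1 φ2) = ⊤) :
    span R2 (Prod.snd '' gluingKernel φ1 φ2) = ⊤ := by
  refine eq_top_iff.2 fun m2 _ ↦ ?_
  obtain ⟨m1, n, hn, hm1n⟩ := exists_sub_eq_of_span_fst_gluingKernel_eq_top hf hφ1 h1 (φ2 m2)
  have hmem : (m1, m2 + n) ∈ gluingKernel φ1 φ2 := by
    show φ1 m1 = φ2 (m2 + n)
    rw [map_add, ← hm1n, sub_add_cancel]
  have hm2n : m2 + n ∈ span R2 (Prod.snd '' gluingKernel φ1 φ2) := subset_span ⟨_, hmem, rfl⟩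
  simpa using sub_mem hm2n hn

end Gluing

theorem gluing_datum_surjectivity_general
    {R1 R2 R12 : Type*} [CommRing R1] [CommRing R2] [CommRing R12]
    [Algebra R1 R12] [Algebra R2 R12]
    (hsurjring : ∀ z : R12, ∃ (x1 : R1) (x2 : R2),
      algebraMap R1 R12 x1 - algebraMap R2 R12 x2 = z)
    {M1 M2 M12 : Type*}
    [AddCommGroup M1] [Module R1 M1] [Module.Finite R1 M1]
    [AddCommGroup M2] [Module R2 M2] [Module.Finite R2 M2]
    [AddCommGroup M12] [Module R12 M12]
    (ψ1 : (R12 ⊗[R1] M1) ≃ₗ[R12] M12) (ψ2 : (R12 ⊗[R2] M2) ≃ₗ[R12] M12)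
    (M : Set (M1 × M2))
    (hM : M = {x : M1 × M2 | ψ1 ((1 : R12) ⊗ₜ[R1] x.1) = ψ2 ((1 : R12) ⊗ₜ[R2] x.2)})
    (hsur1 : Submodule.span R1 (Prod.fst '' M) = ⊤) :
    (∀ z : M12, ∃ (m1 : M1) (m2 : M2),
        ψ1 ((1 : R12) ⊗ₜ[R1] m1) - ψ2 ((1 : R12) ⊗ₜ[R2] m2) = z) ∧
    (Submodule.span R2 (Prod.snd '' M) = ⊤) ∧
    (∃ s : Finset (M1 × M2), ↑s ⊆ M ∧
      Submodule.span R1 (Prod.fst '' (s : Set (M1 × M2))) = ⊤ ∧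
      Submodule.span R2 (Prod.snd '' (s : Set (M1 × M2))) = ⊤) := by
  let φ1 := ψ1.toLinearMap ∘ₛₗ oneTmulₛₗ R1 R12 M1
  let φ2 := ψ2.toLinearMap ∘ₛₗ oneTmulₛₗ R2 R12 M2
  have hM : M = gluingKernel φ1 φ2 := hM
  have hφ1 : span R12 (Set.range φ1) = ⊤ := by
    rw [LinearMap.coe_comp, Set.range_comp, span_image, span_range_oneTmulₛₗ, Submodule.map_top,
      LinearEquiv.range]
  subst hM
  have hsur2 := span_snd_gluingKernel_eq_top hsurjring hφ1 hsur1
  refine ⟨fun z ↦ ?_, hsur2, exists_finset_subset_span_fst_snd_eq_top hsur1 hsur2⟩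
  obtain ⟨m1, m2, -, h⟩ := exists_sub_eq_of_span_fst_gluingKernel_eq_top hsurjring hφ1 hsur1 z
  exact ⟨m1, m2, h⟩

/-- Kedlaya–Liu gluing lemma.  Given a gluing diagram of rings
`R → R₁, R₂ → R₁₂` (so that `0 → R → R₁ ⊕ R₂ → R₁₂ → 0` is exact) and a finite gluing
datum `(M₁, M₂, M₁₂, ψ₁, ψ₂)`, let `M = ker(ψ₁ - ψ₂ : M₁ ⊕ M₂ → M₁₂)`.
If the natural map `M ⊗_R R₁ → M₁` is surjective (equivalently, the image of `M` in `M₁`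
generates `M₁` over `R₁`), then:
(1) `ψ₁ - ψ₂ : M₁ ⊕ M₂ → M₁₂` is surjective;
(2) `M ⊗_R R₂ → M₂` is surjective;
(3) there is a finitely generated `R`-submodule `M₀ ⊆ M` (spanned by a finite subset `s`)
whose base changes to `R₁` and `R₂` surject onto `M₁` and `M₂`. -/
theorem gluing_datum_surjectivity
    {R R1 R2 R12 : Type*} [CommRing R] [CommRing R1] [CommRing R2] [CommRing R12]
    [Algebra R R1] [Algebra R R2] [Algebra R R12] [Algebra R1 R12] [Algebra R2 R12]
    [IsScalarTower R R1 R12] [IsScalarTower R R2 R12]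
    (hinj : Function.Injective fun r : R => (algebraMap R R1 r, algebraMap R R2 r))
    (hmid : ∀ (x1 : R1) (x2 : R2), algebraMap R1 R12 x1 = algebraMap R2 R12 x2 →
      ∃ r : R, algebraMap R R1 r = x1 ∧ algebraMap R R2 r = x2)
    (hsurjring : ∀ z : R12, ∃ (x1 : R1) (x2 : R2),
      algebraMap R1 R12 x1 - algebraMap R2 R12 x2 = z)
    {M1 M2 M12 : Type*}
    [AddCommGroup M1] [Module R1 M1] [Module.Finite R1 M1]
    [AddCommGroup M2] [Module R2 M2] [Module.Finite R2 M2]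
    [AddCommGroup M12] [Module R12 M12] [Module.Finite R12 M12]
    (ψ1 : (R12 ⊗[R1] M1) ≃ₗ[R12] M12) (ψ2 : (R12 ⊗[R2] M2) ≃ₗ[R12] M12)
    (M : Set (M1 × M2))
    (hM : M = {x : M1 × M2 | ψ1 ((1 : R12) ⊗ₜ[R1] x.1) = ψ2 ((1 : R12) ⊗ₜ[R2] x.2)})
    (hsur1 : Submodule.span R1 (Prod.fst '' M) = ⊤) :
    (∀ z : M12, ∃ (m1 : M1) (m2 : M2),
        ψ1 ((1 : R12) ⊗ₜ[R1] m1) - ψ2 ((1 : R12) ⊗ₜ[R2] m2) = z) ∧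
    (Submodule.span R2 (Prod.snd '' M) = ⊤) ∧
    (∃ s : Finset (M1 × M2), ↑s ⊆ M ∧
      Submodule.span R1 (Prod.fst '' (s : Set (M1 × M2))) = ⊤ ∧
      Submodule.span R2 (Prod.snd '' (s : Set (M1 × M2))) = ⊤) :=
  gluing_datum_surjectivity_general hsurjring ψ1 ψ2 M hM hsur1
end

section
/- Let S̃ be a complete adic ring with ideal of definition I, let H be a profinite group acting continuously on S̃ by ring automorphisms, and let a > l₁ > 0 be integers. Suppose there is a 'TS1-type' trace element: for every open subgroup H₁ ⊂ H there exists α ∈ S̃^{H₁} with α·I^{l₁} ⊂ S̃₀ and Σ_{τ ∈ H/H₁} τ(α) = 1. If τ ↦ U_τ is a continuous 1-cocycle on H valued in GL_d(S̃) with U_τ - 1 ∈ M_d(I^a) for all τ ∈ H, then there exists M ∈ GL_d(S̃) with M - 1 ∈ M_d(I^{a-l₁}) such that the cocycle τ ↦ M^{-1} U_τ τ(M) satisfies M^{-1} U_τ τ(M) - 1 ∈ M_d(I^{a+1}) for all τ ∈ H. -/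
/-!
Put `M = ∑_{σ ∈ Q} σ(α) U_σ`, where `α` is the trace element of an open subgroup `K` and `Q` is a
set of representatives of `H/K`. Since `∑ σ(α) = 1`, `M ≡ 1 mod I^a`, so `M` is invertible because
`I` lies in the Jacobson radical. The cocycle relation gives `U_τ τ(M) = ∑_{σ ∈ Q} (τσ)(α) U_{τσ}`.
If `K` is small enough that `U_k ≡ U_1` modulo a power `I^m` which every `σ ∈ H` maps into
`I^{a+1}` (such `m` and `K` exist by compactness of `H` and continuity of `U`), then
`g ↦ g(α) U_g` is constant modulo `I^{a+1}` on left cosets of `K`; as left multiplication by `τ`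
permutes `H/K`, the sum is `M` modulo `I^{a+1}`.
-/

open Filter Topology

theorem eventually_nhds_zero_forall_smul_mem {H X : Type*} [TopologicalSpace H] [CompactSpace H]
    [TopologicalSpace X] [Zero X] [SMulZeroClass H X] [ContinuousSMul H X] {V : Set X}
    (hV : V ∈ 𝓝 0) : ∀ᶠ x in 𝓝 (0 : X), ∀ σ : H, σ • x ∈ V := by
  have hcont : Continuous fun z : X × H => z.2 • z.1 := continuous_snd.smul continuous_fst
  simpa using isCompact_univ.eventually_forall_of_forall_eventually
    (P := fun x (σ : H) => σ • x ∈ V) fun σ _ =>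
      hcont.continuousAt.preimage_mem_nhds (by rwa [smul_zero])

theorem exists_openSubgroup_subset_of_mem_nhds_one {G : Type*} [Group G] [TopologicalSpace G]
    [IsTopologicalGroup G] [CompactSpace G] [TotallyDisconnectedSpace G] {W : Set G}
    (hW : W ∈ 𝓝 1) : ∃ K : OpenSubgroup G, (K : Set G) ⊆ W := by
  obtain ⟨K, hK⟩ := ProfiniteGrp.exist_openNormalSubgroup_sub_open_nhds_of_one isOpen_interior
    (mem_interior_iff_mem_nhds.mpr hW)
  exact ⟨K.toOpenSubgroup, hK.trans interior_subset⟩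

theorem Subgroup.IsComplement.sum_comp_mul_left {G M : Type*} [Group G] [AddCommMonoid M]
    {K : Subgroup G} {S : Finset G} (hS : IsComplement (S : Set G) K) {f : G → M}
    (hf : ∀ g, ∀ k ∈ K, f (g * k) = f g) (τ : G) :
    ∑ σ ∈ S, f (τ * σ) = ∑ σ ∈ S, f σ := by
  let f' : G ⧸ K → M := Quotient.lift f fun g g' h => by
    rw [← hf g (g⁻¹ * g') (QuotientGroup.leftRel_apply.mp h), mul_inv_cancel_left]
  let e : S ≃ G ⧸ K := hS.leftQuotientEquiv.symm
  have : Fintype (G ⧸ K) := Fintype.ofEquiv _ e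
  have sum_eq : ∀ φ : G ⧸ K → M, ∑ σ ∈ S, φ σ = ∑ q, φ q := fun φ =>
    (S.sum_coe_sort _).symm.trans (Fintype.sum_equiv e _ _ fun _ => rfl)
  calc ∑ σ ∈ S, f (τ * σ) = ∑ q, f' (τ • q) := sum_eq fun q => f' (τ • q)
    _ = ∑ q, f' q := Fintype.sum_equiv (MulAction.toPerm τ) _ _ fun _ => rfl
    _ = ∑ σ ∈ S, f σ := (sum_eq f').symm

namespace Ideal

variable {R n : Type*} [CommRing R] [Fintype n] [DecidableEq n]

theorem sub_mem_matrix_iff_mapMatrix_eq (J : Ideal R) {A B : Matrix n n R} :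
    A - B ∈ J.matrix n ↔
      (Ideal.Quotient.mk J).mapMatrix A = (Ideal.Quotient.mk J).mapMatrix B := by
  simp only [mem_matrix, Matrix.sub_apply, RingHom.mapMatrix_apply, ← Matrix.ext_iff,
    Matrix.map_apply, Ideal.Quotient.eq]

theorem smul_mem_matrix (J : Ideal R) (c : R) {A : Matrix n n R} (hA : A ∈ J.matrix n) :
    c • A ∈ J.matrix n :=
  Matrix.smul_eq_diagonal_mul A c ▸ (J.matrix n).mul_mem_left _ hA

theorem isUnit_of_sub_one_mem_matrix {J : Ideal R} (hJ : J ≤ jacobson ⊥) {M : Matrix n n R}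
    (hM : M - 1 ∈ J.matrix n) : IsUnit M := by
  have := isLocalHom_of_le_jacobson_bot J hJ
  have hdet : Ideal.Quotient.mk J M.det = 1 := by
    rw [RingHom.map_det, (sub_mem_matrix_iff_mapMatrix_eq J).mp hM, map_one, Matrix.det_one]
  exact (Matrix.isUnit_iff_isUnit_det M).mpr (isUnit_of_map_unit _ _ (hdet ▸ isUnit_one))

theorem matrix_mem_nhds_zero [TopologicalSpace R] {J : Ideal R} (hJ : (J : Set R) ∈ 𝓝 0) :
    (J.matrix n : Set (Matrix n n R)) ∈ 𝓝 0 :=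
  mem_of_superset (set_pi_mem_nhds Set.finite_univ fun _ _ =>
    set_pi_mem_nhds Set.finite_univ fun _ _ => hJ) fun _ hM i j => hM i trivial j trivial

end Ideal

section Cocycle

variable {G R n : Type*} [Group G] [CommRing R] [MulSemiringAction G R] [Fintype n]
  {U : G → Matrix n n R}

def cocycleAverage (U : G → Matrix n n R) (α : R) (Q : Finset G) : Matrix n n R :=
  ∑ σ ∈ Q, (σ • α) • U σ

theorem cocycleAverage_sub_one_mem [DecidableEq n] {J : Ideal R}
    (hU : ∀ σ, U σ - 1 ∈ J.matrix n) {α : R} {Q : Finset G} (htrace : ∑ σ ∈ Q, σ • α = 1) :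
    cocycleAverage U α Q - 1 ∈ J.matrix n := by
  have : cocycleAverage U α Q - 1 = ∑ σ ∈ Q, (σ • α) • (U σ - 1) := by
    simp only [cocycleAverage, smul_sub, Finset.sum_sub_distrib, ← Finset.sum_smul, htrace,
      one_smul]
  rw [this]
  exact sum_mem fun σ _ => J.smul_mem_matrix _ (hU σ)

theorem mul_map_cocycleAverage (hU : ∀ σ τ, U (σ * τ) = U σ * (U τ).map (σ • ·)) (α : R)
    (Q : Finset G) (τ : G) :
    U τ * (cocycleAverage U α Q).map (τ • ·) = ∑ σ ∈ Q, ((τ * σ) • α) • U (τ * σ) := by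
  have hmap : (cocycleAverage U α Q).map (τ • ·) =
      ∑ σ ∈ Q, ((τ * σ) • α) • (U σ).map (τ • ·) := by
    ext i j
    simp [cocycleAverage, Matrix.sum_apply, Finset.smul_sum, smul_mul', mul_smul]
  rw [hmap, Finset.mul_sum]
  exact Finset.sum_congr rfl fun σ _ => by rw [Matrix.mul_smul, hU]

theorem smul_cocycle_mul_right_sub_mem [DecidableEq n]
    (hU : ∀ σ τ, U (σ * τ) = U σ * (U τ).map (σ • ·)) {J L : Ideal R}
    (hL : ∀ σ : G, ∀ x ∈ L, σ • x ∈ J) {α : R} {k : G} (hα : k • α = α)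
    (hk : U k - U 1 ∈ L.matrix n) (g : G) :
    ((g * k) • α) • U (g * k) - (g • α) • U g ∈ J.matrix n := by
  have : ((g * k) • α) • U (g * k) - (g • α) • U g =
      (g • α) • (U g * (U k - U 1).map (g • ·)) := by
    conv_rhs => rw [Matrix.map_sub _ (smul_sub g), mul_sub, ← hU, ← hU, mul_one]
    rw [mul_smul, hα, smul_sub]
  rw [this]
  exact J.smul_mem_matrix _ <| (J.matrix n).mul_mem_left _ fun i j => hL g _ (hk i j)

theorem mul_map_cocycleAverage_sub_mem [DecidableEq n]
    (hU : ∀ σ τ, U (σ * τ) = U σ * (U τ).map (σ • ·)) {J L : Ideal R}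
    (hL : ∀ σ : G, ∀ x ∈ L, σ • x ∈ J) {K : Subgroup G} (hUK : ∀ k ∈ K, U k - U 1 ∈ L.matrix n)
    {α : R} (hα : ∀ k ∈ K, k • α = α)
    {Q : Finset G} (hQ : Subgroup.IsComplement (Q : Set G) K) (τ : G) :
    U τ * (cocycleAverage U α Q).map (τ • ·) - cocycleAverage U α Q ∈ J.matrix n := by
  rw [mul_map_cocycleAverage hU, Ideal.sub_mem_matrix_iff_mapMatrix_eq, cocycleAverage, map_sum,
    map_sum]
  exact hQ.sum_comp_mul_left (f := fun g => (Ideal.Quotient.mk J).mapMatrix ((g • α) • U g))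
    (fun g k hk => (J.sub_mem_matrix_iff_mapMatrix_eq).mp
      (smul_cocycle_mul_right_sub_mem hU hL (hα k hk) (hUK k hk) g)) τ

end Cocycle

theorem tate_sen_approximation_step_general
    {St : Type*} [CommRing St] [TopologicalSpace St] [IsTopologicalRing St]
    (I : Ideal St) [IsAdicComplete I St] (S0 : Subring St)
    (hbasis : ∀ s : Set St, s ∈ nhds (0 : St) ↔ ∃ n : ℕ, ((I ^ n : Ideal St) : Set St) ⊆ s)
    {H : Type*} [Group H] [TopologicalSpace H] [IsTopologicalGroup H]
    [CompactSpace H] [TotallyDisconnectedSpace H]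
    [MulSemiringAction H St]
    (hact : Continuous fun q : H × St => q.1 • q.2)
    (l1 : ℕ)
    (hTS1 : ∀ H1 : Subgroup H, IsOpen (H1 : Set H) →
      ∃ α : St, (∀ τ ∈ H1, τ • α = α) ∧ (∀ x ∈ I ^ l1, α * x ∈ S0) ∧
        ∃ Q : Finset H, (∀ τ : H, ∃! σ : H, σ ∈ Q ∧ σ⁻¹ * τ ∈ H1) ∧
          (∑ σ ∈ Q, σ • α) = 1)
    (d : ℕ) (a : ℕ) (ha : l1 < a)
    (U : H → Matrix (Fin d) (Fin d) St)
    (hUcont : Continuous U)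
    (hUcoc : ∀ σ τ : H, U (σ * τ) = U σ * (U τ).map (σ • ·))
    (hUnear : ∀ τ : H, ∀ i j, (U τ - 1) i j ∈ I ^ a) :
    ∃ M : Matrix (Fin d) (Fin d) St, IsUnit M ∧
      (∀ i j, (M - 1) i j ∈ I ^ (a - l1)) ∧
      ∀ τ : H, ∀ i j, (M⁻¹ * U τ * M.map (τ • ·) - 1) i j ∈ I ^ (a + 1) := by
  have : ContinuousSMul H St := ⟨hact⟩
  have pow_mem_nhds (k : ℕ) : ((I ^ k : Ideal St) : Set St) ∈ 𝓝 0 := (hbasis _).2 ⟨k, le_rfl⟩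
  obtain ⟨m, hm⟩ :=
    (hbasis _).1 (eventually_nhds_zero_forall_smul_mem (H := H) (pow_mem_nhds (a + 1)))
  obtain ⟨K, hK⟩ := exists_openSubgroup_subset_of_mem_nhds_one <|
    (hUcont.sub continuous_const).continuousAt.preimage_mem_nhds <|
      (sub_self (U 1)).symm ▸ Ideal.matrix_mem_nhds_zero (n := Fin d) (pow_mem_nhds m)
  obtain ⟨α, hα, -, Q, hQ, htrace⟩ := hTS1 K K.isOpen
  have hQK : Subgroup.IsComplement (Q : Set H) K :=
    Subgroup.isComplement_iff_existsUnique_inv_mul_mem.mpr fun g =>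
      let ⟨σ, ⟨hσQ, hσ⟩, huniq⟩ := hQ g
      ⟨⟨σ, hσQ⟩, hσ, fun s hs => Subtype.ext (huniq s ⟨s.2, hs⟩)⟩
  set M := cocycleAverage U α Q
  have hM : M - 1 ∈ (I ^ a).matrix (Fin d) := cocycleAverage_sub_one_mem hUnear htrace
  have hMunit : IsUnit M := Ideal.isUnit_of_sub_one_mem_matrix
    ((Ideal.pow_le_self (by omega)).trans (IsAdicComplete.le_jacobson_bot I)) hM
  refine ⟨M, hMunit, fun i j => Ideal.pow_le_pow_right (Nat.sub_le a l1) (hM i j), fun τ => ?_⟩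
  rw [show M⁻¹ * U τ * M.map (τ • ·) - 1 = M⁻¹ * (U τ * M.map (τ • ·) - M) by
    rw [mul_sub, Matrix.nonsing_inv_mul M ((Matrix.isUnit_iff_isUnit_det M).mp hMunit), mul_assoc]]
  exact (Ideal.matrix _ _).mul_mem_left _ <| mul_map_cocycleAverage_sub_mem hUcoc
    (fun σ x hx => hm hx σ) (fun k hk => hK hk) hα hQK τ

/-- Tate–Sen approximation, axiom (TS1) step.  Let `S̃` be a complete
adic ring with ideal of definition `I` and ring of definition `S̃₀`, endowed with a
continuous action of a profinite group `H`.  Assume the (TS1)-type trace hypothesis with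
constant `l₁`.  If `τ ↦ U_τ` is a continuous `1`-cocycle on `H` valued in `GL_d(S̃)` with
`U_τ - 1 ∈ M_d(I^a)` for all `τ` (where `a > l₁`), then there is `M ∈ GL_d(S̃)` with
`M - 1 ∈ M_d(I^{a-l₁})` such that the cocycle `τ ↦ M⁻¹ U_τ τ(M)` satisfies
`M⁻¹ U_τ τ(M) - 1 ∈ M_d(I^{a+1})`. -/
theorem tate_sen_approximation_step
    {St : Type*} [CommRing St] [TopologicalSpace St] [IsTopologicalRing St]
    (I : Ideal St) [IsAdicComplete I St] (S0 : Subring St)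
    (hbasis : ∀ s : Set St, s ∈ nhds (0 : St) ↔ ∃ n : ℕ, ((I ^ n : Ideal St) : Set St) ⊆ s)
    {H : Type*} [Group H] [TopologicalSpace H] [IsTopologicalGroup H]
    [CompactSpace H] [TotallyDisconnectedSpace H] [T2Space H]
    [MulSemiringAction H St]
    (hact : Continuous fun q : H × St => q.1 • q.2)
    (l1 : ℕ) (hl1 : 0 < l1)
    (hTS1 : ∀ H1 : Subgroup H, IsOpen (H1 : Set H) →
      ∃ α : St, (∀ τ ∈ H1, τ • α = α) ∧ (∀ x ∈ I ^ l1, α * x ∈ S0) ∧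
        ∃ Q : Finset H, (∀ τ : H, ∃! σ : H, σ ∈ Q ∧ σ⁻¹ * τ ∈ H1) ∧
          (∑ σ ∈ Q, σ • α) = 1)
    (d : ℕ) (a : ℕ) (ha : l1 < a)
    (U : H → Matrix (Fin d) (Fin d) St)
    (hUcont : Continuous U)
    (hUunit : ∀ τ : H, IsUnit (U τ))
    (hUcoc : ∀ σ τ : H, U (σ * τ) = U σ * (U τ).map (σ • ·))
    (hUnear : ∀ τ : H, ∀ i j, (U τ - 1) i j ∈ I ^ a) :
    ∃ M : Matrix (Fin d) (Fin d) St, IsUnit M ∧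
      (∀ i j, (M - 1) i j ∈ I ^ (a - l1)) ∧
      ∀ τ : H, ∀ i j, (M⁻¹ * U τ * M.map (τ • ·) - 1) i j ∈ I ^ (a + 1) :=
  tate_sen_approximation_step_general I S0 hbasis hact l1 hTS1 d a ha U hUcont hUcoc hUnear
end

section
/- (Iterated Tate-Sen trivialization) Under the hypotheses of the previous approximation lemma (TS1 trace elements with constant l₁, continuous cocycle U on H valued in GL_d(S̃) with U_τ - 1 ∈ M_d(I^a), a > l₁, and S̃ complete for the I-adic topology), there exists M ∈ GL_d(S̃) with M - 1 ∈ M_d(I^{a-l₁}) such that M^{-1} U_σ σ(M) = 1 for all σ ∈ H; i.e., the cocycle becomes trivial. -/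
/-!
Averaging a cocycle `V ≡ 1 mod I^b` against an element `α` of normalized trace `1` for a
sufficiently small open subgroup `H₁` gives `M = ∑_{σ ∈ H/H₁} σ(α) V_σ ≡ 1 mod I^b` with
`V_τ τ(M) ≡ M mod I^(b+1)`, so that `M⁻¹ V_τ τ(M) ≡ 1 mod I^(b+1)`. Iterating from `b = a`, the
partial products `M_a M_(a+1) ⋯` converge I-adically, and their limit `M` satisfies
`U_σ σ(M) = M`, since this holds modulo every power of `I`.
-/

namespace TateSen

section Matrix

variable {R : Type*} [CommRing R] {n : Type*} [Fintype n] [DecidableEq n]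

theorem smul_mem_matrix {J : Ideal R} (c : R) {X : Matrix n n R} (hX : X ∈ J.matrix n) :
    c • X ∈ J.matrix n :=
  fun i j => J.mul_mem_left c (hX i j)

theorem isUnit_of_sub_one_mem_matrix {J : Ideal R} (hJ : J ≤ (⊥ : Ideal R).jacobson)
    {A : Matrix n n R} (hA : A - 1 ∈ J.matrix n) : IsUnit A := by
  have hrad : A - 1 ∈ (⊥ : Ideal (Matrix n n R)).jacobson := by
    simpa using Ideal.matrix_jacobson_le (n := n) ⊥ (Ideal.matrix_monotone n hJ hA)
  obtain ⟨B, hB⟩ := Ideal.mem_jacobson_iff.mp hrad 1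
  rw [Ideal.mem_bot, mul_one, mul_sub_one, sub_add_cancel, sub_eq_zero] at hB
  exact (Matrix.isUnit_iff_isUnit_det A).mpr (Matrix.isUnit_det_of_left_inverse hB)

theorem eq_zero_of_forall_mem_matrix_pow (I : Ideal R) [IsHausdorff I R] {X : Matrix n n R}
    (hX : ∀ k, X ∈ (I ^ k).matrix n) : X = 0 := by
  ext i j
  refine IsHausdorff.haus ‹_› _ fun k => ?_
  rw [SModEq.zero, Ideal.smul_eq_mul, Ideal.mul_top]
  exact hX k i j

theorem exists_sub_mem_pow_add_of_succ_sub_mem (I : Ideal R) [IsPrecomplete I R] (a : ℕ)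
    {x : ℕ → R} (hx : ∀ k, x (k + 1) - x k ∈ I ^ (a + k)) :
    ∃ L, ∀ k, x k - L ∈ I ^ (a + k) := by
  have hcauchy : ∀ {k l}, k ≤ l → x k - x l ∈ I ^ (a + k) := by
    intro k l hkl
    induction l, hkl using Nat.le_induction with
    | base => simp
    | succ l hkl ih =>
      rw [← sub_add_sub_cancel _ (x l), ← neg_sub (x (l + 1))]
      exact add_mem ih (neg_mem (Ideal.pow_le_pow_right (by omega) (hx l)))
  have hprec := (isPrecomplete_iff (I := I) (M := R)).mp ‹_›
  simp only [smul_eq_mul, Ideal.mul_top, SModEq.sub_mem] at hprec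
  obtain ⟨L, hL⟩ := hprec x fun hkl => Ideal.pow_le_pow_right (by omega) (hcauchy hkl)
  refine ⟨L, fun k => ?_⟩
  rw [← sub_add_sub_cancel _ (x (a + k))]
  exact add_mem (hcauchy (by omega)) (hL (a + k))

theorem exists_sub_mem_matrix_pow_add_of_succ_sub_mem (I : Ideal R) [IsPrecomplete I R] (a : ℕ)
    {X : ℕ → Matrix n n R} (hX : ∀ k, X (k + 1) - X k ∈ (I ^ (a + k)).matrix n) :
    ∃ L, ∀ k, X k - L ∈ (I ^ (a + k)).matrix n := by
  choose L hL using fun i j =>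
    exists_sub_mem_pow_add_of_succ_sub_mem I a (x := fun k => X k i j) fun k => hX k i j
  exact ⟨Matrix.of L, fun k i j => hL i j k⟩

theorem isOpen_matrix [TopologicalSpace R] {J : Ideal R} (hJ : IsOpen (J : Set R)) :
    IsOpen (J.matrix n : Set (Matrix n n R)) := by
  have hset : (J.matrix n : Set (Matrix n n R)) =
      ⋂ i, ⋂ j, (fun X : Matrix n n R => X i j) ⁻¹' J := by
    ext; simp
  rw [hset]
  exact isOpen_iInter_of_finite fun i => isOpen_iInter_of_finite fun j =>
    hJ.preimage (continuous_id.matrix_elem i j)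

end Matrix

theorem sum_mul_left_sub_sum_mem {G A : Type*} [Group G] [AddCommGroup A] (K : AddSubgroup A)
    {H₁ : Subgroup G} {Q : Finset G} (hQ : ∀ τ, ∃! σ, σ ∈ Q ∧ σ⁻¹ * τ ∈ H₁) {f : G → A}
    (hf : ∀ x, ∀ g ∈ H₁, f (x * g) - f x ∈ K) (τ : G) :
    ∑ σ ∈ Q, f (τ * σ) - ∑ σ ∈ Q, f σ ∈ K := by
  choose ρ hρ hρ_unique using hQ
  have hρ_eq : ∀ t, ∀ σ ∈ Q, σ⁻¹ * t ∈ H₁ → ρ t = σ := fun t σ hσ ht =>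
    (hρ_unique t σ ⟨hσ, ht⟩).symm
  have hreindex : ∑ σ ∈ Q, f σ = ∑ σ ∈ Q, f (ρ (τ * σ)) := by
    refine Finset.sum_nbij' (fun σ => ρ (τ⁻¹ * σ)) (fun σ => ρ (τ * σ))
      (fun σ _ => (hρ _).1) (fun σ _ => (hρ _).1) (fun σ hσ => hρ_eq _ _ hσ ?_)
      (fun σ hσ => hρ_eq _ _ hσ ?_) (fun σ hσ => congrArg f (hρ_eq _ _ hσ ?_).symm)
    · simpa [mul_assoc] using H₁.inv_mem (hρ (τ⁻¹ * σ)).2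
    · simpa [mul_assoc] using H₁.inv_mem (hρ (τ * σ)).2
    · simpa [mul_assoc] using H₁.inv_mem (hρ (τ⁻¹ * σ)).2
  rw [hreindex, ← Finset.sum_sub_distrib]
  refine sum_mem fun σ _ => ?_
  simpa using hf (ρ (τ * σ)) _ (hρ (τ * σ)).2

theorem exists_seq_of_forall_exists {α : Type*} {p : ℕ → α → Prop} {r : ℕ → α → α → Prop}
    {x₀ : α} (h₀ : p 0 x₀) (step : ∀ k x, p k x → ∃ y, r k x y ∧ p (k + 1) y) :
    ∃ x : ℕ → α, x 0 = x₀ ∧ ∀ k, p k (x k) ∧ r k (x k) (x (k + 1)) := by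
  have : Nonempty α := ⟨x₀⟩
  choose! next hnext using step
  let x : ℕ → α := fun k => Nat.rec x₀ next k
  have hx : ∀ k, p k (x k) := fun k => by
    induction k with
    | zero => exact h₀
    | succ k ih => exact (hnext k _ ih).2
  exact ⟨x, rfl, fun k => ⟨hx k, (hnext k _ (hx k)).1⟩⟩

section Cocycle

variable {R : Type*} [CommRing R] {n : Type*} {H : Type*} [Group H] [MulSemiringAction H R]

theorem one_map_smul [DecidableEq n] (σ : H) : (1 : Matrix n n R).map (σ • ·) = 1 :=
  Matrix.map_one _ (smul_zero σ) (smul_one σ)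

theorem mul_map_smul [Fintype n] (σ : H) (A B : Matrix n n R) :
    (A * B).map (σ • ·) = A.map (σ • ·) * B.map (σ • ·) :=
  Matrix.map_mul (f := MulSemiringAction.toRingHom H R σ)

theorem sub_map_smul (σ : H) (A B : Matrix n n R) :
    (A - B).map (σ • ·) = A.map (σ • ·) - B.map (σ • ·) :=
  Matrix.map_sub _ (smul_sub σ) A B

theorem map_smul_map_smul (σ τ : H) (A : Matrix n n R) :
    (A.map (τ • ·)).map (σ • ·) = A.map ((σ * τ) • ·) := by
  simp only [Matrix.map_map, Function.comp_def, mul_smul]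

theorem smul_map_smul (σ : H) (c : R) (A : Matrix n n R) :
    (c • A).map (σ • ·) = (σ • c) • A.map (σ • ·) := by
  ext; simp [smul_mul']

theorem continuous_map_smul [TopologicalSpace R] [TopologicalSpace H] [ContinuousSMul H R]
    (M : Matrix n n R) : Continuous fun σ : H => M.map (σ • ·) :=
  continuous_matrix fun _ _ => continuous_id.smul continuous_const

variable [Fintype n] [DecidableEq n]

theorem sum_map_smul {ι : Type*} (σ : H) (s : Finset ι) (A : ι → Matrix n n R) :
    (∑ i ∈ s, A i).map (σ • ·) = ∑ i ∈ s, (A i).map (σ • ·) :=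
  map_sum (MulSemiringAction.toRingHom H R σ).mapMatrix A s

theorem map_smul_mem_matrix {J K : Ideal R} {σ : H} (hσ : ∀ x ∈ J, σ • x ∈ K)
    {X : Matrix n n R} (hX : X ∈ J.matrix n) : X.map (σ • ·) ∈ K.matrix n :=
  fun i j => hσ _ (hX i j)

def IsCocycle (U : H → Matrix n n R) : Prop :=
  ∀ σ τ, U (σ * τ) = U σ * (U τ).map (σ • ·)

noncomputable def twist (M : Matrix n n R) (U : H → Matrix n n R) (σ : H) : Matrix n n R :=
  M⁻¹ * U σ * M.map (σ • ·)

@[simp]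
theorem twist_one (U : H → Matrix n n R) : twist 1 U = U := by
  ext1 σ; simp [twist]

theorem twist_mul (P M : Matrix n n R) (U : H → Matrix n n R) :
    twist (P * M) U = twist M (twist P U) := by
  ext1 σ
  simp only [twist, Matrix.mul_inv_rev, mul_map_smul, Matrix.mul_assoc]

theorem mul_twist {M : Matrix n n R} (hM : IsUnit M) (U : H → Matrix n n R) (σ : H) :
    M * twist M U σ = U σ * M.map (σ • ·) := by
  rw [twist, Matrix.mul_assoc,
    Matrix.mul_nonsing_inv_cancel_left _ _ ((Matrix.isUnit_iff_isUnit_det M).mp hM)]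

theorem twist_sub_one {M : Matrix n n R} (hM : IsUnit M) (U : H → Matrix n n R) (σ : H) :
    twist M U σ - 1 = M⁻¹ * (U σ * M.map (σ • ·) - M) := by
  rw [Matrix.mul_sub, Matrix.nonsing_inv_mul _ ((Matrix.isUnit_iff_isUnit_det M).mp hM), twist,
    Matrix.mul_assoc]

theorem IsCocycle.twist {U : H → Matrix n n R} (hU : IsCocycle U) {M : Matrix n n R}
    (hM : IsUnit M) : IsCocycle (twist M U) := by
  intro σ τ
  have hMσ : M.map (σ • ·) * M⁻¹.map (σ • ·) = 1 := by
    rw [← mul_map_smul, Matrix.mul_nonsing_inv _ ((Matrix.isUnit_iff_isUnit_det M).mp hM),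
      one_map_smul]
  simp only [TateSen.twist, hU σ τ, mul_map_smul, map_smul_map_smul, Matrix.mul_assoc]
  rw [← Matrix.mul_assoc (M.map (σ • ·)), hMσ, Matrix.one_mul]

theorem IsCocycle.apply_one {U : H → Matrix n n R} (hU : IsCocycle U) (h : IsUnit (U 1)) :
    U 1 = 1 := by
  have h11 := hU 1 1
  simp only [one_mul, one_smul, Matrix.map_id'] at h11
  exact h.mul_left_cancel (by rw [mul_one, ← h11])

noncomputable def cocycleAverage (Q : Finset H) (α : R) (V : H → Matrix n n R) : Matrix n n R :=
  ∑ σ ∈ Q, (σ • α) • V σ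

theorem cocycleAverage_sub_one_mem {Q : Finset H} {α : R} (hQα : ∑ σ ∈ Q, σ • α = 1)
    {V : H → Matrix n n R} {J : Ideal R} (hV : ∀ σ, V σ - 1 ∈ J.matrix n) :
    cocycleAverage Q α V - 1 ∈ J.matrix n := by
  have hsum : cocycleAverage Q α V - 1 = ∑ σ ∈ Q, (σ • α) • (V σ - 1) := by
    simp only [cocycleAverage, smul_sub, Finset.sum_sub_distrib, ← Finset.sum_smul, hQα, one_smul]
  rw [hsum]
  exact sum_mem fun σ _ => smul_mem_matrix _ (hV σ)

/-- Translation by `τ` permutes the cosets `σ H₁`, and `h ↦ h(α) V_h` is constant modulo `K` on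
each of them. -/
theorem IsCocycle.mul_map_smul_cocycleAverage_sub_mem {V : H → Matrix n n R} (hV : IsCocycle V)
    {H₁ : Subgroup H} {α : R} (hα : ∀ g ∈ H₁, g • α = α) {Q : Finset H}
    (hQ : ∀ τ, ∃! σ, σ ∈ Q ∧ σ⁻¹ * τ ∈ H₁) {K : Ideal R}
    (hK : ∀ σ : H, ∀ g ∈ H₁, (V g - 1).map (σ • ·) ∈ K.matrix n) (τ : H) :
    V τ * (cocycleAverage Q α V).map (τ • ·) - cocycleAverage Q α V ∈ K.matrix n := by
  set f : H → Matrix n n R := fun σ => (σ • α) • V σ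
  have htranslate : V τ * (cocycleAverage Q α V).map (τ • ·) = ∑ σ ∈ Q, f (τ * σ) := by
    simp only [cocycleAverage, sum_map_smul, Matrix.mul_sum, smul_map_smul, Matrix.mul_smul,
      ← hV τ, mul_smul, f]
  rw [htranslate]
  refine sum_mul_left_sub_sum_mem (K.matrix n).toAddSubgroup hQ (fun x g hg => ?_) τ
  have hdiff : f (x * g) - f x = (x • α) • (V x * (V g - 1).map (x • ·)) := by
    simp only [f, mul_smul, hα g hg, hV x g, sub_map_smul, one_map_smul, Matrix.mul_sub,
      Matrix.mul_one, smul_sub]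
  rw [hdiff]
  exact smul_mem_matrix _ (Ideal.mul_mem_left _ _ (hK x g hg))

theorem mul_map_smul_eq_of_approx (I : Ideal R) [IsHausdorff I R] {σ : H}
    (hσ : ∀ k, ∃ m, ∀ x ∈ I ^ m, σ • x ∈ I ^ k) (A : Matrix n n R) {P : ℕ → Matrix n n R}
    {M : Matrix n n R} (hPM : ∀ k, P k - M ∈ (I ^ k).matrix n)
    (hAP : ∀ k, A * (P k).map (σ • ·) - P k ∈ (I ^ k).matrix n) :
    A * M.map (σ • ·) = M := by
  rw [← sub_eq_zero]
  refine eq_zero_of_forall_mem_matrix_pow I fun k => ?_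
  obtain ⟨m, hm⟩ := hσ k
  have hmono : ∀ {j l}, j ≤ l → (I ^ l).matrix n ≤ (I ^ j).matrix n := fun h =>
    Ideal.matrix_monotone n (Ideal.pow_le_pow_right h)
  have hdecomp : A * M.map (σ • ·) - M = (A * (P (m + k)).map (σ • ·) - P (m + k)) -
      A * (P (m + k) - M).map (σ • ·) + (P (m + k) - M) := by
    rw [sub_map_smul, Matrix.mul_sub]; abel
  rw [hdecomp]
  refine add_mem (sub_mem (hmono (by omega) (hAP _)) (Ideal.mul_mem_left _ _ ?_))
    (hmono (by omega) (hPM _))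
  exact map_smul_mem_matrix hm (hmono (by omega) (hPM _))

end Cocycle

/-- `Q` is a set of representatives of `H / H₁`, so the sum is the normalized trace
`Tr_{H/H₁} α` of Tate–Sen theory. -/
def HasTraceOne (H R : Type*) [Group H] [TopologicalSpace H] [AddCommMonoid R] [One R]
    [SMul H R] : Prop :=
  ∀ H₁ : Subgroup H, IsOpen (H₁ : Set H) → ∃ α : R, (∀ τ ∈ H₁, τ • α = α) ∧
    ∃ Q : Finset H, (∀ τ : H, ∃! σ : H, σ ∈ Q ∧ σ⁻¹ * τ ∈ H₁) ∧ ∑ σ ∈ Q, σ • α = 1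

section Adic

variable {R : Type*} [CommRing R] [TopologicalSpace R] {n : Type*} [Fintype n] [DecidableEq n]
  {H : Type*} [Group H] [TopologicalSpace H] [MulSemiringAction H R]

theorem exists_pow_forall_smul_mem [CompactSpace H] [ContinuousSMul H R] {I : Ideal R}
    (hI : IsAdic I) (k : ℕ) : ∃ m, ∀ σ : H, ∀ x ∈ I ^ m, σ • x ∈ I ^ k := by
  have hnear : ∀ σ ∈ (Set.univ : Set H), ∀ᶠ p : R × H in nhds (0, σ), p.2 • p.1 ∈ I ^ k := by
    intro σ _
    have hcont : Continuous fun p : R × H => p.2 • p.1 := continuous_snd.smul continuous_fst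
    exact hcont.tendsto' (0, σ) 0 (smul_zero σ) (hI.hasBasis_nhds_zero.mem_of_mem trivial)
  obtain ⟨m, -, hm⟩ := hI.hasBasis_nhds_zero.eventually_iff.mp
    (isCompact_univ.eventually_forall_of_forall_eventually (P := fun x σ => σ • x ∈ I ^ k) hnear)
  exact ⟨m, fun σ x hx => hm hx σ (Set.mem_univ σ)⟩

structure IsCocycleNearOne (I : Ideal R) (b : ℕ) (V : H → Matrix n n R) : Prop where
  continuous : Continuous V
  isCocycle : IsCocycle V
  sub_one_mem : ∀ σ, V σ - 1 ∈ (I ^ b).matrix n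

theorem IsCocycleNearOne.exists_twist_succ [IsTopologicalRing R] [IsTopologicalGroup H]
    [CompactSpace H] [TotallyDisconnectedSpace H] [ContinuousSMul H R] {I : Ideal R}
    (hI : IsAdic I) (hIJ : I ≤ (⊥ : Ideal R).jacobson) (hTS : HasTraceOne H R) {b : ℕ}
    (hb : 1 ≤ b) {V : H → Matrix n n R} (hV : IsCocycleNearOne I b V) :
    ∃ M, M - 1 ∈ (I ^ b).matrix n ∧ IsUnit M ∧ IsCocycleNearOne I (b + 1) (twist M V) := by
  have hIb : I ^ b ≤ (⊥ : Ideal R).jacobson := (Ideal.pow_le_self (by omega)).trans hIJ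
  obtain ⟨m, hm⟩ := exists_pow_forall_smul_mem (H := H) hI (b + 1)
  have hopen : IsOpen {g | V g - 1 ∈ (I ^ m).matrix n} :=
    (isOpen_matrix ((isAdic_iff.mp hI).1 m)).preimage (hV.continuous.sub continuous_const)
  have hV₁ : V 1 = 1 :=
    hV.isCocycle.apply_one (isUnit_of_sub_one_mem_matrix hIb (hV.sub_one_mem 1))
  obtain ⟨H₁, hH₁⟩ := ProfiniteGrp.exist_openNormalSubgroup_sub_open_nhds_of_one hopen
    (by simp [hV₁])
  obtain ⟨α, hα, Q, hQ, hQα⟩ := hTS H₁.toSubgroup H₁.isOpen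
  have hM₁ := cocycleAverage_sub_one_mem hQα hV.sub_one_mem
  have hM := isUnit_of_sub_one_mem_matrix hIb hM₁
  refine ⟨_, hM₁, hM, ⟨?_, hV.isCocycle.twist hM, fun τ => ?_⟩⟩
  · exact (continuous_const.matrix_mul hV.continuous).matrix_mul (continuous_map_smul _)
  · rw [twist_sub_one hM]
    exact Ideal.mul_mem_left _ _ (hV.isCocycle.mul_map_smul_cocycleAverage_sub_mem hα hQ
      (fun σ g hg => map_smul_mem_matrix (hm σ) (hH₁ hg)) τ)

theorem IsCocycleNearOne.exists_twist_eq_one [IsTopologicalRing R] [IsTopologicalGroup H]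
    [CompactSpace H] [TotallyDisconnectedSpace H] [ContinuousSMul H R] {I : Ideal R}
    [IsAdicComplete I R] (hI : IsAdic I) (hTS : HasTraceOne H R) {a : ℕ} (ha : 1 ≤ a)
    {U : H → Matrix n n R} (hU : IsCocycleNearOne I a U) :
    ∃ M, IsUnit M ∧ M - 1 ∈ (I ^ a).matrix n ∧ ∀ σ, twist M U σ = 1 := by
  have hIJ := IsAdicComplete.le_jacobson_bot I
  have hmono : ∀ {k l}, k ≤ l → (I ^ l).matrix n ≤ (I ^ k).matrix n := fun h =>
    Ideal.matrix_monotone n (Ideal.pow_le_pow_right h)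
  obtain ⟨P, hP₀, hP⟩ := exists_seq_of_forall_exists
    (p := fun k P => IsUnit P ∧ IsCocycleNearOne I (a + k) (twist P U))
    (r := fun k P P' => P' - P ∈ (I ^ (a + k)).matrix n) ⟨isUnit_one, by rwa [twist_one]⟩
    fun k P ⟨hP, hPU⟩ => by
      obtain ⟨M, hM₁, hM, hMU⟩ := hPU.exists_twist_succ hI hIJ hTS (by omega)
      refine ⟨P * M, ?_, hP.mul hM, by rwa [twist_mul]⟩
      rw [← mul_sub_one]
      exact Ideal.mul_mem_left _ _ hM₁
  obtain ⟨M, hPM⟩ := exists_sub_mem_matrix_pow_add_of_succ_sub_mem I a fun k => (hP k).2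
  have hM₁ : M - 1 ∈ (I ^ a).matrix n := by simpa [hP₀] using neg_mem (hPM 0)
  have hM := isUnit_of_sub_one_mem_matrix ((Ideal.pow_le_self (by omega)).trans hIJ) hM₁
  refine ⟨M, hM, hM₁, fun σ => ?_⟩
  have hfix : U σ * M.map (σ • ·) = M := by
    refine mul_map_smul_eq_of_approx I
      (fun k => (exists_pow_forall_smul_mem hI k).imp fun _ hm => hm σ) (U σ)
      (fun k => hmono (l := a + k) (by omega) (hPM k))
      fun k => hmono (l := a + k) (by omega) ?_
    rw [← mul_twist (hP k).1.1, ← mul_sub_one]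
    exact Ideal.mul_mem_left _ _ ((hP k).1.2.sub_one_mem σ)
  rw [twist, Matrix.mul_assoc, hfix,
    Matrix.nonsing_inv_mul _ ((Matrix.isUnit_iff_isUnit_det M).mp hM)]

end Adic

end TateSen

theorem tate_sen_cocycle_trivialization_general
    {St : Type*} [CommRing St] [TopologicalSpace St] [IsTopologicalRing St]
    (I : Ideal St) [IsAdicComplete I St] (S0 : Subring St)
    (hbasis : ∀ s : Set St, s ∈ nhds (0 : St) ↔ ∃ n : ℕ, ((I ^ n : Ideal St) : Set St) ⊆ s)
    {H : Type*} [Group H] [TopologicalSpace H] [IsTopologicalGroup H]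
    [CompactSpace H] [TotallyDisconnectedSpace H]
    [MulSemiringAction H St]
    (hact : Continuous fun q : H × St => q.1 • q.2)
    (l1 : ℕ)
    (hTS1 : ∀ H1 : Subgroup H, IsOpen (H1 : Set H) →
      ∃ α : St, (∀ τ ∈ H1, τ • α = α) ∧ (∀ x ∈ I ^ l1, α * x ∈ S0) ∧
        ∃ Q : Finset H, (∀ τ : H, ∃! σ : H, σ ∈ Q ∧ σ⁻¹ * τ ∈ H1) ∧
          (∑ σ ∈ Q, σ • α) = 1)
    (d : ℕ) (a : ℕ) (ha : l1 < a)
    (U : H → Matrix (Fin d) (Fin d) St)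
    (hUcont : Continuous U)
    (hUcoc : ∀ σ τ : H, U (σ * τ) = U σ * (U τ).map (σ • ·))
    (hUnear : ∀ τ : H, ∀ i j, (U τ - 1) i j ∈ I ^ a) :
    ∃ M : Matrix (Fin d) (Fin d) St, IsUnit M ∧
      (∀ i j, (M - 1) i j ∈ I ^ (a - l1)) ∧
      ∀ σ : H, M⁻¹ * U σ * M.map (σ • ·) = 1 := by
  have : ContinuousSMul H St := ⟨hact⟩
  have hI : IsAdic I := isAdic_iff.mpr ⟨fun k => AddSubgroup.isOpen_of_mem_nhds
    (I ^ k).toAddSubgroup ((hbasis _).mpr ⟨k, subset_rfl⟩), fun s hs => (hbasis s).mp hs⟩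
  have hTS : TateSen.HasTraceOne H St := fun H₁ hH₁ => by
    obtain ⟨α, hα, -, Q, hQ, hQα⟩ := hTS1 H₁ hH₁
    exact ⟨α, hα, Q, hQ, hQα⟩
  obtain ⟨M, hM, hM₁, hMU⟩ :=
    TateSen.IsCocycleNearOne.exists_twist_eq_one hI hTS (by omega) ⟨hUcont, hUcoc, hUnear⟩
  exact ⟨M, hM, fun i j => Ideal.pow_le_pow_right (Nat.sub_le a l1) (hM₁ i j), hMU⟩

/-- iterated Tate–Sen trivialization.  Let `S̃` be a complete
adic ring with ideal of definition `I` and ring of definition `S̃₀`, endowed with a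
continuous action of a profinite group `H`.  Assume the (TS1)-type trace hypothesis with
constant `l₁`.  If `τ ↦ U_τ` is a continuous `1`-cocycle on `H` valued in `GL_d(S̃)` with
`U_τ - 1 ∈ M_d(I^a)` for all `τ` (where `a > l₁`), then there is `M ∈ GL_d(S̃)` with
`M - 1 ∈ M_d(I^{a-l₁})` such that `M⁻¹ U_σ σ(M) = 1` for all `σ ∈ H`, i.e. the cocycle
becomes trivial. -/
theorem tate_sen_cocycle_trivialization
    {St : Type*} [CommRing St] [TopologicalSpace St] [IsTopologicalRing St]
    (I : Ideal St) [IsAdicComplete I St] (S0 : Subring St)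
    (hbasis : ∀ s : Set St, s ∈ nhds (0 : St) ↔ ∃ n : ℕ, ((I ^ n : Ideal St) : Set St) ⊆ s)
    {H : Type*} [Group H] [TopologicalSpace H] [IsTopologicalGroup H]
    [CompactSpace H] [TotallyDisconnectedSpace H] [T2Space H]
    [MulSemiringAction H St]
    (hact : Continuous fun q : H × St => q.1 • q.2)
    (l1 : ℕ) (hl1 : 0 < l1)
    (hTS1 : ∀ H1 : Subgroup H, IsOpen (H1 : Set H) →
      ∃ α : St, (∀ τ ∈ H1, τ • α = α) ∧ (∀ x ∈ I ^ l1, α * x ∈ S0) ∧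
        ∃ Q : Finset H, (∀ τ : H, ∃! σ : H, σ ∈ Q ∧ σ⁻¹ * τ ∈ H1) ∧
          (∑ σ ∈ Q, σ • α) = 1)
    (d : ℕ) (a : ℕ) (ha : l1 < a)
    (U : H → Matrix (Fin d) (Fin d) St)
    (hUcont : Continuous U)
    (hUunit : ∀ τ : H, IsUnit (U τ))
    (hUcoc : ∀ σ τ : H, U (σ * τ) = U σ * (U τ).map (σ • ·))
    (hUnear : ∀ τ : H, ∀ i j, (U τ - 1) i j ∈ I ^ a) :
    ∃ M : Matrix (Fin d) (Fin d) St, IsUnit M ∧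
      (∀ i j, (M - 1) i j ∈ I ^ (a - l1)) ∧
      ∀ σ : H, M⁻¹ * U σ * M.map (σ • ·) = 1 :=
  tate_sen_cocycle_trivialization_general I S0 hbasis hact l1 hTS1 d a ha U hUcont hUcoc hUnear
end
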